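/- Let (E, ℛ, τ) satisfy conditions (i), (ii), (iii). Given e ∈ E×, pairwise distinct R_1, …, R_r ∈ ℛ(e), and for each 1 ≤ i ≤ r an element ε_i ∈ E(⋁R_i) ∪ {e − ⋁R_i} ⊆ ℤ[E×], set ε := ∏_{i=1}^r ε_i and, for 1 ≤ j ≤ r, ε(ĵ) := ∏_{i≠j} ε_i (interpreted as e when r = 1). Then for every 1 ≤ j ≤ r: if ε(ĵ) ≠ 0, then ε·ε(ĵ) = ε and ε ≠ ε(ĵ). -/

import Mathlib

set_option linter.unusedSectionVars false

/-- A *semilattice with zero*: a commutative idempotent semigroup with an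
absorbing element `0`. -/
class SemilatticeWithZero (E : Type) extends CommSemigroup E, Zero E where
  mul_idem : ∀ e : E, e * e = e
  zero_mul : ∀ e : E, 0 * e = 0

namespace IndRes

variable {E : Type} [SemilatticeWithZero E]

/-- `single e c`, viewed in the semigroup algebra `ℤ[E]`. -/
noncomputable def sgl (e : E) (c : ℤ) : MonoidAlgebra ℤ E := MonoidAlgebra.ofCoeff (Finsupp.single e c)

/-- Truncation map deleting the coefficient at `0`. -/
noncomputable def T (x : MonoidAlgebra ℤ E) : MonoidAlgebra ℤ E := x - sgl 0 (x.coeff 0)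

lemma sgl_apply_self (e : E) (c : ℤ) : (sgl e c).coeff e = c := Finsupp.single_eq_same

lemma sgl_apply_ne (e d : E) (c : ℤ) (h : e ≠ d) : (sgl e c).coeff d = 0 := Finsupp.single_eq_of_ne h.symm

lemma sgl_add (e : E) (c d : ℤ) : sgl e (c + d) = sgl e c + sgl e d := congrArg MonoidAlgebra.ofCoeff (Finsupp.single_add e c d)

lemma sgl_sub (e : E) (c d : ℤ) : sgl e (c - d) = sgl e c - sgl e d := congrArg MonoidAlgebra.ofCoeff (Finsupp.single_sub e c d)

lemma T_apply_zero (x : MonoidAlgebra ℤ E) : (T x).coeff 0 = 0 := by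
  show ((x - sgl 0 (x.coeff 0) : MonoidAlgebra ℤ E)).coeff 0 = 0
  rw [MonoidAlgebra.coeff_sub, Finsupp.sub_apply, sgl_apply_self, sub_self]

/-- `ℤ[E^×]`, realized as the additive subgroup of the semigroup algebra
`ℤ[E]` consisting of the elements whose coefficient at `0` vanishes; it is the free
`ℤ`-module with basis `E^× = E \ {0}`. -/
noncomputable def ZS (E : Type) [SemilatticeWithZero E] : AddSubgroup (MonoidAlgebra ℤ E) where
  carrier := {x | x.coeff 0 = 0}
  zero_mem' := rfl
  add_mem' := by
    intro a b ha hb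
    simp only [Set.mem_setOf_eq] at *
    rw [MonoidAlgebra.coeff_add, Finsupp.add_apply, ha, hb, add_zero]
  neg_mem' := by
    intro a ha
    simp only [Set.mem_setOf_eq] at *
    rw [MonoidAlgebra.coeff_neg, Finsupp.neg_apply, ha, neg_zero]

/-- The integral semigroup ring `ℤ[E^×]`. -/
abbrev ZE (E : Type) [SemilatticeWithZero E] : Type := ↥(ZS E)

lemma mem_ZS {x : MonoidAlgebra ℤ E} : x ∈ ZS E ↔ x.coeff 0 = 0 := Iff.rfl

lemma T_eq_self {x : MonoidAlgebra ℤ E} (h : x.coeff 0 = 0) : T x = x := by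
  simp [T, h, sgl]

lemma T_add (a b : MonoidAlgebra ℤ E) : T (a + b) = T a + T b := by
  unfold T
  rw [show ((a + b).coeff 0) = a.coeff 0 + b.coeff 0 from Finsupp.add_apply a.coeff b.coeff 0, sgl_add]
  abel

lemma T_sub_sgl (x : MonoidAlgebra ℤ E) (m : ℤ) : T (x - sgl 0 m) = T x := by
  unfold T
  have h : ((x - sgl 0 m : MonoidAlgebra ℤ E)).coeff 0 = x.coeff 0 - m := by
    rw [MonoidAlgebra.coeff_sub, Finsupp.sub_apply, sgl_apply_self]
  rw [h, sgl_sub]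
  abel

lemma single_zero_mul (c : ℤ) (b : MonoidAlgebra ℤ E) :
    (sgl 0 c) * b = sgl 0 (((sgl 0 c * b : MonoidAlgebra ℤ E)).coeff 0) := by
  classical
  ext d
  by_cases hd : d = 0
  · subst hd; rw [sgl_apply_self]
  · rw [sgl_apply_ne 0 d _ (Ne.symm hd)]
    by_contra h
    have hmem : d ∈ ((sgl (0:E) c) * b).coeff.support := Finsupp.mem_support_iff.mpr h
    have h2 := MonoidAlgebra.support_coeff_mul_subset (sgl (0:E) c) b hmem
    rw [Finset.mem_mul] at h2
    obtain ⟨a, ha, b', _, hab⟩ := h2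
    have ha' : a = 0 := by
      have := Finsupp.support_single_subset (ha : a ∈ (Finsupp.single (0:E) c).support)
      simpa using this
    exact hd (by rw [← hab, ha', SemilatticeWithZero.zero_mul])

lemma T_mul_left (a b : MonoidAlgebra ℤ E) : T (T a * b) = T (a * b) := by
  have h1 : T a * b = a * b - (sgl 0 (a.coeff 0)) * b := by rw [T, sub_mul]
  rw [h1, single_zero_mul, T_sub_sgl]

lemma T_mul_right (a b : MonoidAlgebra ℤ E) : T (a * T b) = T (a * b) := by
  rw [mul_comm a (T b), T_mul_left, mul_comm]

noncomputable instance : Mul (ZE E) :=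
  ⟨fun x y => ⟨T (x.1 * y.1), T_apply_zero _⟩⟩

lemma ZE.val_mul (x y : ZE E) : (x * y).1 = T (x.1 * y.1) := rfl

noncomputable instance : NonUnitalCommRing (ZE E) :=
  { (inferInstance : AddCommGroup (ZE E)) with
    mul := (· * ·)
    left_distrib := by
      intro x y z
      apply Subtype.ext
      show T (x.1 * (y.1 + z.1)) = T (x.1 * y.1) + T (x.1 * z.1)
      rw [mul_add, T_add]
    right_distrib := by
      intro x y z
      apply Subtype.ext
      show T ((x.1 + y.1) * z.1) = T (x.1 * z.1) + T (y.1 * z.1)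
      rw [add_mul, T_add]
    zero_mul := by
      intro x
      apply Subtype.ext
      show T ((0 : MonoidAlgebra ℤ E) * x.1) = 0
      rw [zero_mul]
      simp [T, sgl]
    mul_zero := by
      intro x
      apply Subtype.ext
      show T (x.1 * (0 : MonoidAlgebra ℤ E)) = 0
      rw [mul_zero]
      simp [T, sgl]
    mul_assoc := by
      intro x y z
      apply Subtype.ext
      show T (T (x.1 * y.1) * z.1) = T (x.1 * T (y.1 * z.1))
      rw [T_mul_left, T_mul_right, mul_assoc]
    mul_comm := by
      intro x y
      apply Subtype.ext
      show T (x.1 * y.1) = T (y.1 * x.1)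
      rw [mul_comm] }

/-- The canonical image of `e ∈ E` in `ℤ[E^×]`: the basis element `e` if `e ≠ 0`,
and `0` if `e = 0`. -/
noncomputable def elt (e : E) : ZE E := ⟨T (sgl e 1), T_apply_zero _⟩

/-- Product of a (nonempty) finite family in a commutative non-unital ring, computed inside
the unitization.  For a nonempty index set this is the iterated product. -/
noncomputable def nprod {ι A : Type} [NonUnitalCommRing A] (s : Finset ι) (f : ι → A) : A :=
  (∏ j ∈ s, (Unitization.inr (f j) : Unitization ℤ A)).snd

/-- The join `⋁_{j ∈ J} x_j = ∑_{∅ ≠ J' ⊆ J} (-1)^{|J'|+1} ∏_{j ∈ J'} x_j`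
of a finite family of idempotents of a commutative non-unital ring. -/
noncomputable def rjoin {ι A : Type} [NonUnitalCommRing A] (s : Finset ι) (f : ι → A) : A :=
  ∑ t ∈ s.powerset.filter (fun t => t.Nonempty), ((-1 : ℤ) ^ (t.card + 1)) • nprod t f

/-- The join `⋁_{j ∈ J} e_j ∈ ℤ[E^×]` of a finite family of elements of `E`:
`∑_{∅ ≠ J' ⊆ J} (-1)^{|J'|+1} ∏_{j ∈ J'} e_j`, where a product whose value in `E`
is `0` contributes `0`. -/
noncomputable def join {ι : Type} (s : Finset ι) (e : ι → E) : ZE E :=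
  rjoin s (fun j => elt (e j))

/-- Iterated product of a nonempty list in a semigroup with zero (the value on the
empty list is the junk value `0`). -/
def listProd : List E → E
  | [] => 0
  | [a] => a
  | a :: b :: l => a * listProd (b :: l)

/-- The product `∏_{j ∈ s} f j ∈ E` of a (nonempty) finite family. -/
noncomputable def eprod {ι : Type} (s : Finset ι) (f : ι → E) : E :=
  listProd (s.toList.map f)

/-- The support `E(x)` of `x ∈ ℤ[E^×]`: the finite set of elements of `E^×` appearing
with a nonzero coefficient in the reduced form of `x`. -/
noncomputable def supp (x : ZE E) : Finset E := x.1.coeff.support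

section Action

variable {Γ : Type} [Group Γ] [MulAction Γ E]

/-- The induced action of `g ∈ Γ` on `ℤ[E^×]`: the `ℤ`-linear map sending a basis
element `e ∈ E^×` to `g • e`.  (When the action fixes `0` — which is the case for an
action by semigroup automorphisms fixing `0` — the truncation `T` is a no-op, and this
is the automorphism of `ℤ[E^×]` induced by `τ_g`.) -/
noncomputable def act (g : Γ) (x : ZE E) : ZE E :=
  ⟨T (MonoidAlgebra.ofCoeff (Finsupp.mapDomain (fun e : E => g • e) x.1.coeff)), T_apply_zero _⟩

end Action



attribute [local instance] Classical.propDecidable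

variable {E : Type} [SemilatticeWithZero E]

/-- A Γ-semilattice structure: the group acts by semigroup automorphisms fixing `0`. -/
def IsGammaSL (Γ E : Type) [Group Γ] [SemilatticeWithZero E] [MulAction Γ E] : Prop :=
  (∀ (g : Γ) (x y : E), g • (x * y) = (g • x) * (g • y)) ∧ (∀ g : Γ, g • (0 : E) = 0)

/-- The set `E_φ`. -/
def Ephi {D : Type} [NonUnitalCommRing D] (φ : ZE E →ₙ+* D) : Set (ZE E) :=
  { x | ∃ (e : E) (J : Finset E), e ≠ 0 ∧ (∀ f ∈ J, f ≠ 0 ∧ f * e = f ∧ f ≠ e) ∧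
      x = elt e - join J (fun f => f) ∧
      φ (elt e) = rjoin J (fun f => φ (elt f)) }

/-- `R` is a finite cover for `e ∈ E^×`. -/
def IsCover (e : E) (R : Finset E) : Prop :=
  (∀ f ∈ R, f ≠ 0 ∧ f * e = f) ∧
  ∀ f' : E, f' ≠ 0 → f' * e = f' → ∃ f ∈ R, f' * f ≠ 0

/-- `ℛ` is a collection of finite covers for `E`. -/
def CovSystem (ℛ : E → Set (Finset E)) : Prop :=
  ∀ e : E, e ≠ 0 → ∀ R ∈ ℛ e, IsCover e R

/-- Condition (i). -/
def CondI (ℛ : E → Set (Finset E)) : Prop :=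
  ∀ d e : E, d ≠ 0 → e ≠ 0 → d * e ≠ 0 → ∀ R ∈ ℛ e,
    d * e ∈ (R.image (fun f => d * f)).erase 0 ∨ (R.image (fun f => d * f)).erase 0 ∈ ℛ (d * e)

/-- Condition (ii). -/
def CondII (ℛ : E → Set (Finset E)) : Prop :=
  ∀ e : E, e ≠ 0 → ∀ r : ℕ, 0 < r → ∀ Rs : Fin r → Finset E,
    Function.Injective Rs → (∀ i, Rs i ∈ ℛ e) → ∀ ε : Fin r → E,
    (∀ i, ε i ∈ supp (join (Rs i) (fun f => f))) → ∀ j : Fin r,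
      (if r = 1 then e else eprod (Finset.univ.erase j) ε) ≠ 0 →
      eprod Finset.univ ε * (if r = 1 then e else eprod (Finset.univ.erase j) ε)
          = eprod Finset.univ ε ∧
      eprod Finset.univ ε ≠ (if r = 1 then e else eprod (Finset.univ.erase j) ε)

/-- Condition (iii). -/
def CondIII (Γ : Type) [Group Γ] [MulAction Γ E] (ℛ : E → Set (Finset E)) : Prop :=
  ∀ (g : Γ) (e : E), e ≠ 0 →
    (fun R : Finset E => R.image (fun f => g • f)) '' (ℛ e) = ℛ (g • e)

/-- `e(𝒮) = ∏_{R ∈ 𝒮} (e - ⋁R) ∈ ℤ[E^×]`. -/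
noncomputable def eS (e : E) (S : Finset (Finset E)) : ZE E :=
  nprod S (fun R => elt e - join R (fun f => f))

/-- `E(E,ℛ) = {e(𝒮) : e ∈ E^×, 𝒮 ⊆ ℛ(e) nonempty finite} ∪ {0} ⊆ ℤ[E^×]`. -/
def EER (ℛ : E → Set (Finset E)) : Set (ZE E) :=
  {x | ∃ (e : E) (S : Finset (Finset E)), e ≠ 0 ∧ S.Nonempty ∧ ↑S ⊆ ℛ e ∧ x = eS e S} ∪ {0}

/-- `R(𝒮,R̃) = {e(𝒮 ∪ {R̃})} ∪ {f ⬝ e(𝒮) : f ∈ R̃, f ⬝ e(𝒮) ≠ 0}`. -/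
noncomputable def RSR (e : E) (S : Finset (Finset E)) (Rt : Finset E) : Finset (ZE E) :=
  insert (eS e (insert Rt S)) ((Rt.image (fun f => elt f * eS e S)).erase 0)

/-- The collection of finite covers `ℛ(E,ℛ)` on `E(E,ℛ)`, assigning to an element
`x = e(𝒮)` of `E(E,ℛ)^×` the covers `R(𝒮,R̃)`, `R̃ ∈ ℛ(e) ∖ 𝒮` (over all ways of
presenting `x` in the form `e(𝒮)`). -/
def RER (ℛ : E → Set (Finset E)) (x : ZE E) : Set (Finset (ZE E)) :=
  {C | ∃ (e : E) (S : Finset (Finset E)) (Rt : Finset E),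
        e ≠ 0 ∧ S.Nonempty ∧ ↑S ⊆ ℛ e ∧ Rt ∈ ℛ e ∧ Rt ∉ S ∧ x = eS e S ∧ C = RSR e S Rt}

/-- The `ℤ`-linear map `ℤ[E₁^×] → ℤ[E₂^×]` induced by a map `θ` from `E₁` to `ℤ[E₂^×]`,
sending a basis element `e' ∈ E₁^×` to `θ e'`. -/
noncomputable def indMap {E₁ E₂ : Type} [SemilatticeWithZero E₁] [SemilatticeWithZero E₂]
    (θ : E₁ → ZE E₂) : ZE E₁ →ₗ[ℤ] ZE E₂ :=
  (Finsupp.linearCombination ℤ θ).comp ((MonoidAlgebra.coeffLinearEquiv ℤ).toLinearMap.comp (ZS E₁).subtype.toIntLinearMap)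

/-- `(E₁, ℛ₁, θ)` is a realization of the construction `(E(E,ℛ), ℛ(E,ℛ))`:
`θ` identifies the abstract Γ-semilattice `E₁` with `E(E,ℛ) ⊆ ℤ[E^×]` (equivariantly,
multiplicatively and preserving `0`), and `ℛ₁` corresponds to `ℛ(E,ℛ)` under this
identification. -/
def Realizes {Γ E E₁ : Type} [Group Γ] [SemilatticeWithZero E] [MulAction Γ E]
    [SemilatticeWithZero E₁] [MulAction Γ E₁]
    (ℛ : E → Set (Finset E)) (ℛ₁ : E₁ → Set (Finset E₁)) (θ : E₁ → ZE E) : Prop :=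
  Function.Injective θ ∧ Set.range θ = EER ℛ ∧ θ 0 = 0 ∧
  (∀ x y : E₁, θ (x * y) = θ x * θ y) ∧
  (∀ (g : Γ) (x : E₁), θ (g • x) = act g (θ x)) ∧
  (∀ e' : E₁, e' ≠ 0 → ∀ C : Finset E₁, C ∈ ℛ₁ e' ↔ C.image θ ∈ RER ℛ (θ e'))

end IndRes

open IndRes

/-!
For `m ∈ E^×` the indicator `n ↦ [m ≤ n]` of the principal filter of `m` is multiplicative, so
it extends to a character `χ_m : ℤ[E^×] → ℤ`, and these characters separate points: at a maximal
element `m` of the support of `x`, `χ_m(x)` is the coefficient `x_m`. On joins,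
`χ_m(⋁R) = [m ≤ f for some f ∈ R]`, so every admissible factor `ε_i` is an idempotent absorbed
by `e`, which gives `ε ε(ĵ) = ε`.

For `ε ≠ ε(ĵ)` it suffices to find `m` with `χ_m(ε(ĵ)) = 1` and `χ_m(ε_j) = 0`. Let
`D = e ∏ d_i` over the `i ≠ j` with `ε_i = d_i ∈ E(⋁R_i)`; it is nonzero because `ε(ĵ)` is.
Take `m = D` if `ε_j = d_j`, and `m = n D ≠ 0` for some `n ∈ E(⋁R_j)` if `ε_j = e - ⋁R_j`
(such an `n` exists because `R_j` covers `e`). Condition (ii) says that such a product of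
support elements lies below no further support element, hence below no element of a further
cover `R_i`; so `χ_m(e - ⋁R_i) = 1` for the remaining factors. In the first case (ii) also gives
`D ≰ d_j`, and in the second `m ≤ n ≤ f` for some `f ∈ R_j` kills `e - ⋁R_j`.
-/

namespace IndRes

open scoped Classical

variable {E : Type} [SemilatticeWithZero E]

instance : PartialOrder E where
  le a b := a * b = a
  le_refl := SemilatticeWithZero.mul_idem
  le_trans a b c (hab : a * b = a) (hbc : b * c = b) := by
    rw [← hab, mul_assoc, hbc]
  le_antisymm a b (hab : a * b = a) (hba : b * a = b) := by
    rw [← hab, mul_comm, hba]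

theorem le_def {a b : E} : a ≤ b ↔ a * b = a := Iff.rfl

theorem mul_le_left (a b : E) : a * b ≤ a := by
  rw [le_def, mul_right_comm, SemilatticeWithZero.mul_idem]

theorem mul_le_right (a b : E) : a * b ≤ b := by
  rw [le_def, mul_assoc, SemilatticeWithZero.mul_idem]

theorem le_mul_iff {m a b : E} : m ≤ a * b ↔ m ≤ a ∧ m ≤ b :=
  ⟨fun h => ⟨h.trans (mul_le_left a b), h.trans (mul_le_right a b)⟩,
    fun ⟨(ha : m * a = m), (hb : m * b = m)⟩ => by rw [le_def, ← mul_assoc, ha, hb]⟩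

theorem not_le_zero {m : E} (hm : m ≠ 0) : ¬ m ≤ 0 := by
  rw [le_def, mul_comm, SemilatticeWithZero.zero_mul]
  exact hm.symm

theorem ne_zero_of_le {m a : E} (hm : m ≠ 0) (h : m ≤ a) : a ≠ 0 := by
  rintro rfl
  exact not_le_zero hm h

section Products

variable {ι : Type}

theorem le_listProd_iff {m : E} :
    ∀ {l : List E}, l ≠ [] → (m ≤ listProd l ↔ ∀ a ∈ l, m ≤ a)
  | [], h => absurd rfl h
  | [a], _ => by simp [listProd]
  | a :: b :: l, _ => by
    change m ≤ a * listProd (b :: l) ↔ _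
    rw [le_mul_iff, le_listProd_iff (List.cons_ne_nil b l)]
    simp only [List.forall_mem_cons]

theorem le_eprod_iff {m : E} {s : Finset ι} (hs : s.Nonempty) (f : ι → E) :
    m ≤ eprod s f ↔ ∀ i ∈ s, m ≤ f i := by
  rw [eprod, le_listProd_iff (by simpa using hs.ne_empty)]
  simp

def foldMul (e : E) (s : Finset ι) (f : ι → E) : E :=
  s.fold (· * ·) e f

theorem foldMul_insert [DecidableEq ι] {e : E} {s : Finset ι} {i : ι} (hi : i ∉ s) (f : ι → E) :
    foldMul e (insert i s) f = f i * foldMul e s f :=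
  Finset.fold_insert hi

theorem foldMul_congr {e : E} {s : Finset ι} {f g : ι → E} (h : ∀ i ∈ s, f i = g i) :
    foldMul e s f = foldMul e s g :=
  Finset.fold_congr h

theorem le_foldMul_iff {m e : E} (s : Finset ι) (f : ι → E) :
    m ≤ foldMul e s f ↔ m ≤ e ∧ ∀ i ∈ s, m ≤ f i := by
  induction s using Finset.induction_on with
  | empty => simp [foldMul]
  | insert i s hi ih =>
    rw [foldMul_insert hi, le_mul_iff, ih, Finset.forall_mem_insert]
    tauto

theorem foldMul_le (e : E) (s : Finset ι) (f : ι → E) : foldMul e s f ≤ e :=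
  ((le_foldMul_iff s f).1 le_rfl).1

theorem foldMul_le_of_mem (e : E) {s : Finset ι} {i : ι} (hi : i ∈ s) (f : ι → E) :
    foldMul e s f ≤ f i :=
  ((le_foldMul_iff s f).1 le_rfl).2 i hi

theorem eprod_eq_foldMul {e : E} {s : Finset ι} (hs : s.Nonempty) {f : ι → E}
    (hf : ∀ i ∈ s, f i ≤ e) : eprod s f = foldMul e s f := by
  obtain ⟨i, hi⟩ := hs
  refine eq_of_forall_le_iff fun m => ?_
  rw [le_eprod_iff ⟨i, hi⟩, le_foldMul_iff]
  exact ⟨fun h => ⟨(h i hi).trans (hf i hi), h⟩, And.right⟩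

end Products

section NonUnitalProducts

variable {ι A : Type} [NonUnitalCommRing A]

theorem inr_nprod {s : Finset ι} (hs : s.Nonempty) (f : ι → A) :
    (Unitization.inr (nprod s f) : Unitization ℤ A) = ∏ i ∈ s, Unitization.inr (f i) := by
  have hfst : (∏ i ∈ s, (Unitization.inr (f i) : Unitization ℤ A)).fst = 0 := by
    induction hs using Finset.Nonempty.cons_induction with
    | singleton i => simp
    | cons i s hi hs ih =>
      rw [Finset.prod_cons, Unitization.fst_mul, Unitization.fst_inr, zero_mul]
  exact Unitization.ext (by rw [Unitization.fst_inr, hfst]) rfl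

theorem nprod_singleton (i : ι) (f : ι → A) : nprod {i} f = f i := by
  simp [nprod]

theorem nprod_insert [DecidableEq ι] {s : Finset ι} {i : ι} (hi : i ∉ s) (hs : s.Nonempty)
    (f : ι → A) : nprod (insert i s) f = f i * nprod s f := by
  apply Unitization.inr_injective (R := ℤ)
  rw [inr_nprod (Finset.insert_nonempty i s), Finset.prod_insert hi, Unitization.inr_mul,
    inr_nprod hs]

theorem isIdempotentElem_nprod {s : Finset ι} (hs : s.Nonempty) {f : ι → A}
    (hf : ∀ i ∈ s, IsIdempotentElem (f i)) : IsIdempotentElem (nprod s f) := by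
  induction hs using Finset.Nonempty.cons_induction with
  | singleton i => rw [nprod_singleton]; exact hf i (Finset.mem_singleton_self i)
  | cons i s hi hs ih =>
    rw [Finset.cons_eq_insert, nprod_insert hi hs]
    exact (hf i (by simp)).mul (ih fun k hk => hf k (by simp [hk]))

variable {B : Type} [CommRing B] (φ : A →ₙ+* B)

theorem map_nprod {s : Finset ι} (hs : s.Nonempty) (f : ι → A) :
    φ (nprod s f) = ∏ i ∈ s, φ (f i) := by
  induction hs using Finset.Nonempty.cons_induction with
  | singleton i => rw [nprod_singleton, Finset.prod_singleton]
  | cons i s hi hs ih =>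
    rw [Finset.cons_eq_insert, nprod_insert hi hs, map_mul, ih, Finset.prod_insert hi]

theorem map_rjoin (s : Finset ι) (f : ι → A) :
    φ (rjoin s f) = 1 - ∏ i ∈ s, (1 - φ (f i)) := by
  have hexpand : ∏ i ∈ s, (1 - φ (f i))
      = ∑ t ∈ s.powerset, (-1) ^ t.card * ∏ i ∈ t, φ (f i) := by
    simp_rw [sub_eq_add_neg, Finset.prod_one_add, Finset.prod_neg]
  have hempty : s.powerset.filter (fun t => ¬ t.Nonempty) = {∅} := by
    ext t
    simp only [Finset.mem_filter, Finset.mem_powerset, Finset.not_nonempty_iff_eq_empty,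
      Finset.mem_singleton]
    exact ⟨And.right, fun h => ⟨h ▸ Finset.empty_subset s, h⟩⟩
  rw [hexpand, ← Finset.sum_filter_add_sum_filter_not _ (fun t => t.Nonempty), hempty, rjoin,
    map_sum, Finset.sum_singleton]
  simp only [map_zsmul, Finset.card_empty, pow_zero, Finset.prod_empty, mul_one]
  rw [sub_add_cancel_right, ← Finset.sum_neg_distrib]
  refine Finset.sum_congr rfl fun t ht => ?_
  rw [map_nprod φ (Finset.mem_filter.1 ht).2, zsmul_eq_mul]
  push_cast
  ring

end NonUnitalProducts

theorem elt_zero : (elt 0 : ZE E) = 0 := by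
  apply Subtype.ext
  change T (sgl 0 1) = 0
  rw [T, sgl_apply_self, sub_self]

theorem elt_mul (a b : E) : (elt (a * b) : ZE E) = elt a * elt b := by
  apply Subtype.ext
  change T (sgl (a * b) 1) = T (T (sgl a 1) * T (sgl b 1))
  rw [T_mul_left, T_mul_right, sgl, sgl, sgl, MonoidAlgebra.ofCoeff_single,
    MonoidAlgebra.ofCoeff_single, MonoidAlgebra.ofCoeff_single, MonoidAlgebra.single_mul_single,
    one_mul]

theorem isIdempotentElem_elt (a : E) : IsIdempotentElem (elt a : ZE E) := by
  rw [IsIdempotentElem, ← elt_mul, SemilatticeWithZero.mul_idem]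

theorem mem_supp_ne_zero {x : ZE E} {n : E} (h : n ∈ supp x) : n ≠ 0 := by
  rintro rfl
  exact Finsupp.mem_support_iff.1 h x.2

theorem eq_zero_of_supp_eq_empty {x : ZE E} (h : supp x = ∅) : x = 0 :=
  Subtype.ext (MonoidAlgebra.coeff_injective (Finsupp.support_eq_empty.1 h))

noncomputable def filterIndicator (m : E) : E →ₙ* ℤ where
  toFun n := if m ≤ n then 1 else 0
  map_mul' a b := by
    simp only [le_mul_iff]
    split_ifs <;> simp_all

/-- The character `χ_m(x) = ∑_{n ≥ m} x_n`; it is multiplicative on `ℤ[E^×]` because the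
truncation at `0` is invisible to it when `m ≠ 0`. -/
noncomputable def principalChar (m : E) (hm : m ≠ 0) : ZE E →ₙ+* ℤ where
  toFun x := MonoidAlgebra.liftMagma ℤ (filterIndicator m) x.1
  map_zero' := map_zero (MonoidAlgebra.liftMagma ℤ (filterIndicator m))
  map_add' x y := map_add (MonoidAlgebra.liftMagma ℤ (filterIndicator m)) x.1 y.1
  map_mul' x y := by
    change MonoidAlgebra.liftMagma ℤ (filterIndicator m) (T (x.1 * y.1)) = _
    rw [T, map_sub, map_mul, sub_eq_self, sgl, MonoidAlgebra.ofCoeff_single]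
    simp [filterIndicator, not_le_zero hm]

section PrincipalCharacters

variable {m : E} {hm : m ≠ 0}

theorem principalChar_apply (x : ZE E) :
    principalChar m hm x = ∑ n ∈ supp x, x.1.coeff n * if m ≤ n then 1 else 0 := by
  change MonoidAlgebra.liftMagma ℤ (filterIndicator m) x.1 = _
  simp [Finsupp.sum, supp, filterIndicator]

theorem principalChar_elt (d : E) : principalChar m hm (elt d) = if m ≤ d then 1 else 0 := by
  by_cases hd : d = 0
  · subst hd
    rw [elt_zero, map_zero, if_neg (not_le_zero hm)]
  · change MonoidAlgebra.liftMagma ℤ (filterIndicator m) (T (sgl d 1)) = _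
    rw [T_eq_self (sgl_apply_ne d 0 1 hd), sgl, MonoidAlgebra.ofCoeff_single]
    simp [filterIndicator]

theorem principalChar_join {ι : Type} (R : Finset ι) (g : ι → E) :
    principalChar m hm (join R g) = if ∃ i ∈ R, m ≤ g i then 1 else 0 := by
  rw [join, map_rjoin]
  simp_rw [principalChar_elt]
  rw [Finset.prod_congr rfl fun i _ => show (1 : ℤ) - (if m ≤ g i then 1 else 0)
    = if ¬ m ≤ g i then 1 else 0 by split_ifs <;> simp, Finset.prod_boole]
  by_cases h : ∃ i ∈ R, m ≤ g i
  · obtain ⟨i, hi, hmi⟩ := h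
    rw [if_neg fun h' => h' i hi hmi, if_pos ⟨i, hi, hmi⟩, sub_zero]
  · push Not at h
    rw [if_pos h, if_neg (by simpa using h), sub_self]

theorem exists_le_of_principalChar_ne_zero {x : ZE E} (h : principalChar m hm x ≠ 0) :
    ∃ n ∈ supp x, m ≤ n := by
  rw [principalChar_apply] at h
  obtain ⟨n, hn, hne⟩ := Finset.exists_ne_zero_of_sum_ne_zero h
  exact ⟨n, hn, by_contra fun hmn => hne (by simp [hmn])⟩

/-- Otherwise `χ_k(x) = x_k ≠ 0` for a maximal element `k` of the support outside `Q`. -/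
theorem forall_mem_supp_of_principalChar_eq_zero {Q : E → Prop}
    (hQ : ∀ a b, b ≤ a → Q a → Q b) {x : ZE E}
    (hx : ∀ m (hm : m ≠ 0), ¬ Q m → principalChar m hm x = 0) : ∀ n ∈ supp x, Q n := by
  by_contra! ⟨n, hn, hQn⟩
  obtain ⟨k, -, hk⟩ :=
    ((supp x).filter (¬ Q ·)).exists_le_maximal (Finset.mem_filter.2 ⟨hn, hQn⟩)
  obtain ⟨hkx, hQk⟩ := Finset.mem_filter.1 hk.prop
  apply Finsupp.mem_support_iff.1 hkx
  rw [← hx k (mem_supp_ne_zero hkx) hQk, principalChar_apply, Finset.sum_eq_single k,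
    if_pos le_rfl, mul_one]
  · intro n' hn' hne
    rw [if_neg, mul_zero]
    intro hkn'
    have hn'Q : n' ∈ (supp x).filter (¬ Q ·) :=
      Finset.mem_filter.2 ⟨hn', fun hQn' => hQk (hQ n' k hkn' hQn')⟩
    exact hne (hk.eq_of_le hn'Q hkn').symm
  · exact fun h => absurd hkx h

theorem exists_principalChar_ne_zero {x : ZE E} (hx : x ≠ 0) :
    ∃ m, ∃ hm : m ≠ 0, principalChar m hm x ≠ 0 := by
  by_contra! h
  refine hx (eq_zero_of_supp_eq_empty (Finset.eq_empty_of_forall_notMem fun n hn => ?_))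
  exact forall_mem_supp_of_principalChar_eq_zero (Q := fun _ => False) (fun _ _ _ => id)
    (fun m hm _ => h m hm) n hn

theorem eq_of_principalChar_eq {x y : ZE E}
    (h : ∀ m (hm : m ≠ 0), principalChar m hm x = principalChar m hm y) : x = y := by
  by_contra hxy
  obtain ⟨m, hm, hne⟩ := exists_principalChar_ne_zero (sub_ne_zero.2 hxy)
  exact hne (by rw [map_sub, h, sub_self])

end PrincipalCharacters

/-- `E(⋁R) ∪ {e - ⋁R}`, where the factors `ε_i` live. -/
def coverFactors (e : E) (R : Finset E) : Set (ZE E) :=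
  {x | (∃ d ∈ supp (join R fun f => f), x = elt d) ∨ x = elt e - join R fun f => f}

section Covers

variable {e : E} {R : Finset E}

theorem exists_le_of_mem_supp_join {n : E} (hn : n ∈ supp (join R fun f => f)) :
    ∃ f ∈ R, n ≤ f :=
  forall_mem_supp_of_principalChar_eq_zero (Q := fun n => ∃ f ∈ R, n ≤ f)
    (fun _ _ hba ⟨f, hf, haf⟩ => ⟨f, hf, hba.trans haf⟩)
    (fun _ _ hQ => by rw [principalChar_join, if_neg hQ]) n hn

theorem exists_mem_supp_join_of_le {m f : E} (hm : m ≠ 0) (hf : f ∈ R) (hmf : m ≤ f) :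
    ∃ n ∈ supp (join R fun f => f), m ≤ n :=
  exists_le_of_principalChar_ne_zero (hm := hm)
    (by rw [principalChar_join, if_pos ⟨f, hf, hmf⟩]; exact one_ne_zero)

theorem principalChar_compl_join {m : E} (hm : m ≠ 0) :
    principalChar m hm (elt e - join R fun f => f)
      = (if m ≤ e then 1 else 0) - if ∃ f ∈ R, m ≤ f then 1 else 0 := by
  rw [map_sub, principalChar_elt, principalChar_join]

namespace IsCover

theorem le_of_mem_supp_join (hR : IsCover e R) {n : E} (hn : n ∈ supp (join R fun f => f)) :
    n ≤ e := by
  obtain ⟨f, hf, hnf⟩ := exists_le_of_mem_supp_join hn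
  exact hnf.trans (hR.1 f hf).2

theorem exists_mem_supp_join_mul_ne_zero (hR : IsCover e R) {d : E} (hd : d ≠ 0)
    (hde : d ≤ e) : ∃ n ∈ supp (join R fun f => f), d * n ≠ 0 := by
  obtain ⟨f, hf, hdf⟩ := hR.2 d hd hde
  obtain ⟨n, hn, hfn⟩ := exists_mem_supp_join_of_le hdf hf (mul_le_right d f)
  exact ⟨n, hn, ne_zero_of_le hdf (le_mul_iff.2 ⟨mul_le_left d f, hfn⟩)⟩

theorem principalChar_compl_join_eq_ite (hR : IsCover e R) {m : E} (hm : m ≠ 0) :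
    principalChar m hm (elt e - join R fun f => f)
      = if m ≤ e ∧ ∀ f ∈ R, ¬ m ≤ f then 1 else 0 := by
  rw [principalChar_compl_join]
  by_cases hmR : ∃ f ∈ R, m ≤ f
  · obtain ⟨f, hf, hmf⟩ := hmR
    rw [if_pos (hmf.trans (hR.1 f hf).2), if_pos ⟨f, hf, hmf⟩, if_neg fun h => h.2 f hf hmf,
      sub_self]
  · rw [if_neg hmR, sub_zero]
    push Not at hmR
    by_cases hme : m ≤ e
    · rw [if_pos hme, if_pos ⟨hme, hmR⟩]
    · rw [if_neg hme, if_neg fun h => hme h.1]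

theorem isIdempotentElem_of_mem_coverFactors (hR : IsCover e R) {x : ZE E}
    (hx : x ∈ coverFactors e R) : IsIdempotentElem x := by
  rcases hx with ⟨d, -, rfl⟩ | rfl
  · exact isIdempotentElem_elt d
  · refine eq_of_principalChar_eq fun m hm => ?_
    rw [map_mul, hR.principalChar_compl_join_eq_ite]
    split_ifs <;> simp

theorem mul_elt_of_mem_coverFactors (hR : IsCover e R) {x : ZE E}
    (hx : x ∈ coverFactors e R) : x * elt e = x := by
  rcases hx with ⟨d, hd, rfl⟩ | rfl
  · rw [← elt_mul, hR.le_of_mem_supp_join hd]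
  · refine eq_of_principalChar_eq fun m hm => ?_
    rw [map_mul, hR.principalChar_compl_join_eq_ite, principalChar_elt]
    split_ifs <;> simp_all

end IsCover

end Covers

section ConditionII

variable {ℛ : E → Set (Finset E)} {e : E} {ι : Type} [DecidableEq ι] {Rs : ι → Finset E}

/-- Condition (ii) for the subfamily indexed by `insert j s`; starting the product at `e`
realises the convention `ε(ĵ) = e` for a single factor. -/
theorem not_foldMul_le_of_condII (hcov : CovSystem ℛ) (h2 : CondII ℛ) (he : e ≠ 0)
    (hinj : Function.Injective Rs) (hRs : ∀ i, Rs i ∈ ℛ e) {s : Finset ι} {j : ι}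
    (hj : j ∉ s) {δ : ι → E} (hδ : ∀ i ∈ insert j s, δ i ∈ supp (join (Rs i) fun f => f))
    (hne : foldMul e s δ ≠ 0) : ¬ foldMul e s δ ≤ δ j := by
  set t := insert j s
  let σ : Fin t.card ≃ t := t.equivFin.symm
  let g : Fin t.card → ι := fun k => σ k
  have hg : Function.Injective g := Subtype.val_injective.comp σ.injective
  let j' := σ.symm ⟨j, Finset.mem_insert_self j s⟩
  have hgj : g j' = j := by simp [g, j']
  have hfold : ∀ u : Finset (Fin t.card), u.Nonempty →
      eprod u (δ ∘ g) = foldMul e (u.image g) δ := fun u hu => by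
    rw [eprod_eq_foldMul (f := δ ∘ g) hu fun k _ =>
      (hcov e he _ (hRs _)).le_of_mem_supp_join (hδ _ (σ k).2), foldMul, foldMul,
      Finset.fold_image hg.injOn]
  have huniv : Finset.univ.image g = t := by
    ext x
    simp only [Finset.mem_image, Finset.mem_univ, true_and]
    exact ⟨fun ⟨k, hk⟩ => hk ▸ (σ k).2, fun hx => ⟨σ.symm ⟨x, hx⟩, by simp [g]⟩⟩
  have hfull : eprod Finset.univ (δ ∘ g) = δ j * foldMul e s δ := by
    rw [hfold _ ⟨j', Finset.mem_univ _⟩, huniv, foldMul_insert hj]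
  have homit : (if t.card = 1 then e else eprod (Finset.univ.erase j') (δ ∘ g))
      = foldMul e s δ := by
    have hcard : t.card = s.card + 1 := Finset.card_insert_of_notMem hj
    split_ifs with h1
    · rw [Finset.card_eq_zero.1 (by omega : s.card = 0), foldMul, Finset.fold_empty]
    · have hne' : (Finset.univ.erase j').Nonempty := Finset.card_pos.1 (by
        rw [Finset.card_erase_of_mem (Finset.mem_univ _), Finset.card_univ, Fintype.card_fin]
        omega)
      rw [hfold _ hne', Finset.image_erase hg, huniv, hgj, Finset.erase_insert hj]
  have hlt := (h2 e he t.card (Finset.card_pos.2 ⟨j, Finset.mem_insert_self j s⟩) (Rs ∘ g)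
    (hinj.comp hg) (fun k => hRs _) (δ ∘ g) (fun k => hδ _ (σ k).2) j'
    (by rw [homit]; exact hne)).2
  rw [hfull, homit] at hlt
  exact fun h => hlt (by rw [mul_comm]; exact h)

/-- For `i ∉ s` the product lies below no `f ∈ R_i`: it would then lie below an element of
`E(⋁R_i)`, against condition (ii). -/
theorem principalChar_foldMul_eq_one (hcov : CovSystem ℛ) (h2 : CondII ℛ) (he : e ≠ 0)
    (hinj : Function.Injective Rs) (hRs : ∀ i, Rs i ∈ ℛ e) {s : Finset ι} {δ : ι → E}
    (hδ : ∀ k ∈ s, δ k ∈ supp (join (Rs k) fun f => f)) (hm : foldMul e s δ ≠ 0)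
    {i : ι} {x : ZE E}
    (hx : (i ∈ s ∧ x = elt (δ i)) ∨ (i ∉ s ∧ x = elt e - join (Rs i) fun f => f)) :
    principalChar _ hm x = 1 := by
  rcases hx with ⟨hi, rfl⟩ | ⟨hi, rfl⟩
  · rw [principalChar_elt, if_pos (foldMul_le_of_mem e hi δ)]
  rw [principalChar_compl_join, if_pos (foldMul_le e s δ), if_neg, sub_zero]
  rintro ⟨f, hf, hmf⟩
  obtain ⟨n, hn, hmn⟩ := exists_mem_supp_join_of_le hm hf hmf
  have hfold : foldMul e s (Function.update δ i n) = foldMul e s δ :=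
    foldMul_congr fun k hk => Function.update_of_ne (ne_of_mem_of_not_mem hk hi) n δ
  refine not_foldMul_le_of_condII hcov h2 he hinj hRs hi (δ := Function.update δ i n) ?_
    (hfold ▸ hm) (by rw [hfold, Function.update_self]; exact hmn)
  intro k hk
  rcases Finset.mem_insert.1 hk with rfl | hk
  · rwa [Function.update_self]
  · rw [Function.update_of_ne (ne_of_mem_of_not_mem hk hi)]
    exact hδ k hk

/-- The separating point is `D = e ∏_{i ∈ A} d_i` if `ε_j = d_j`, and `n D` for some
`n ∈ E(⋁R_j)` with `n D ≠ 0` if `ε_j = e - ⋁R_j`. -/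
theorem exists_separating_principalChar_of_foldMul (hcov : CovSystem ℛ) (h2 : CondII ℛ)
    (he : e ≠ 0) (hinj : Function.Injective Rs) (hRs : ∀ i, Rs i ∈ ℛ e) {ε : ι → ZE E}
    {I A : Finset ι} {j : ι} (hj : j ∉ I) (hjA : j ∉ A) {d : ι → E}
    (hd : ∀ i ∈ A, d i ∈ supp (join (Rs i) fun f => f))
    (hεI : ∀ i ∈ I,
      (i ∈ A ∧ ε i = elt (d i)) ∨ (i ∉ A ∧ ε i = elt e - join (Rs i) fun f => f))
    (hεj : (d j ∈ supp (join (Rs j) fun f => f) ∧ ε j = elt (d j)) ∨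
      ε j = elt e - join (Rs j) fun f => f)
    (hD : foldMul e A d ≠ 0) :
    ∃ m, ∃ hm : m ≠ 0, m ≤ e ∧ (∀ i ∈ I, principalChar m hm (ε i) = 1) ∧
      principalChar m hm (ε j) = 0 := by
  rcases hεj with ⟨hdj, hεj⟩ | hεj
  · refine ⟨_, hD, foldMul_le e A d,
      fun i hi => principalChar_foldMul_eq_one hcov h2 he hinj hRs hd hD (hεI i hi), ?_⟩
    rw [hεj, principalChar_elt, if_neg (not_foldMul_le_of_condII hcov h2 he hinj hRs hjA ?_ hD)]
    intro k hk
    rcases Finset.mem_insert.1 hk with rfl | hk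
    exacts [hdj, hd k hk]
  obtain ⟨n, hn, hDn⟩ :=
    (hcov e he _ (hRs j)).exists_mem_supp_join_mul_ne_zero hD (foldMul_le e A d)
  have hδA : ∀ i ∈ A, Function.update d j n i = d i :=
    fun i hi => Function.update_of_ne (ne_of_mem_of_not_mem hi hjA) n d
  have hfold : foldMul e (insert j A) (Function.update d j n) = n * foldMul e A d := by
    rw [foldMul_insert hjA, foldMul_congr hδA, Function.update_self]
  have hm : foldMul e (insert j A) (Function.update d j n) ≠ 0 := by
    rw [hfold, mul_comm]
    exact hDn
  have hδ : ∀ k ∈ insert j A, Function.update d j n k ∈ supp (join (Rs k) fun f => f) := by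
    intro k hk
    rcases Finset.mem_insert.1 hk with rfl | hk
    · rwa [Function.update_self]
    · rw [hδA k hk]
      exact hd k hk
  have hεI' : ∀ i ∈ I, (i ∈ insert j A ∧ ε i = elt (Function.update d j n i)) ∨
      (i ∉ insert j A ∧ ε i = elt e - join (Rs i) fun f => f) := by
    intro i hi
    rcases hεI i hi with ⟨hiA, hεi⟩ | ⟨hiA, hεi⟩
    · exact Or.inl ⟨Finset.mem_insert_of_mem hiA, by rw [hεi, hδA i hiA]⟩
    · exact Or.inr ⟨by simp [hiA, ne_of_mem_of_not_mem hi hj], hεi⟩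
  obtain ⟨f, hf, hnf⟩ := exists_le_of_mem_supp_join hn
  refine ⟨_, hm, foldMul_le _ _ _,
    fun i hi => principalChar_foldMul_eq_one hcov h2 he hinj hRs hδ hm (hεI' i hi), ?_⟩
  rw [hεj, principalChar_compl_join, if_pos (foldMul_le _ _ _),
    if_pos ⟨f, hf, hfold ▸ (mul_le_left n _).trans hnf⟩, sub_self]

theorem exists_separating_principalChar (hcov : CovSystem ℛ) (h2 : CondII ℛ) (he : e ≠ 0)
    (hinj : Function.Injective Rs) (hRs : ∀ i, Rs i ∈ ℛ e) {ε : ι → ZE E}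
    (hε : ∀ i, ε i ∈ coverFactors e (Rs i)) {I : Finset ι} {j : ι} (hj : j ∉ I)
    {m₀ : E} (hm₀ : m₀ ≠ 0) (hm₀e : m₀ ≤ e)
    (hm₀I : ∀ i ∈ I, principalChar m₀ hm₀ (ε i) ≠ 0) :
    ∃ m, ∃ hm : m ≠ 0, m ≤ e ∧ (∀ i ∈ I, principalChar m hm (ε i) = 1) ∧
      principalChar m hm (ε j) = 0 := by
  have hchoice : ∀ i, ∃ d, (d ∈ supp (join (Rs i) fun f => f) ∧ ε i = elt d) ∨
      ε i = elt e - join (Rs i) fun f => f := by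
    intro i
    rcases hε i with ⟨d, hd, h⟩ | h
    exacts [⟨d, Or.inl ⟨hd, h⟩⟩, ⟨e, Or.inr h⟩]
  choose d hd using hchoice
  set A := I.filter fun i => d i ∈ supp (join (Rs i) fun f => f) ∧ ε i = elt (d i)
  have hA : ∀ i ∈ A, d i ∈ supp (join (Rs i) fun f => f) ∧ ε i = elt (d i) :=
    fun i hi => (Finset.mem_filter.1 hi).2
  refine exists_separating_principalChar_of_foldMul hcov h2 he hinj hRs hj
    (fun h => hj (Finset.mem_filter.1 h).1) (fun i hi => (hA i hi).1) (fun i hi => ?_) (hd j) ?_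
  · by_cases hiA : i ∈ A
    · exact Or.inl ⟨hiA, (hA i hiA).2⟩
    · exact Or.inr ⟨hiA, (hd i).resolve_left fun h => hiA (Finset.mem_filter.2 ⟨hi, h⟩)⟩
  · refine ne_zero_of_le hm₀ ((le_foldMul_iff A d).2 ⟨hm₀e, fun i hi => ?_⟩)
    have hχ := hm₀I i (Finset.mem_filter.1 hi).1
    rw [(hA i hi).2, principalChar_elt] at hχ
    exact by_contra fun h => hχ (if_neg h)

end ConditionII

section OmitProd

variable {r : ℕ} {e : E} {ε : Fin r → ZE E}

/-- `ε(ĵ) = ∏_{i ≠ j} ε_i`, read as `e` when `r = 1`. -/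
noncomputable def omitProd (e : E) (ε : Fin r → ZE E) (j : Fin r) : ZE E :=
  if r = 1 then elt e else nprod (Finset.univ.erase j) ε

theorem univ_eq_singleton_of_eq_one (hr : r = 1) (j : Fin r) :
    (Finset.univ : Finset (Fin r)) = {j} :=
  Finset.eq_singleton_iff_unique_mem.2
    ⟨Finset.mem_univ j, fun i _ => Fin.ext (by have := i.2; have := j.2; omega)⟩

theorem univ_erase_nonempty_of_ne_one (hr : r ≠ 1) (j : Fin r) :
    (Finset.univ.erase j).Nonempty :=
  Finset.card_pos.1 (by
    rw [Finset.card_erase_of_mem (Finset.mem_univ _), Finset.card_univ, Fintype.card_fin]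
    have := j.2
    omega)

theorem nprod_univ_eq_mul_omitProd (hεe : ∀ i, ε i * elt e = ε i) (j : Fin r) :
    nprod Finset.univ ε = ε j * omitProd e ε j := by
  by_cases hr : r = 1
  · rw [omitProd, if_pos hr, hεe, univ_eq_singleton_of_eq_one hr j, nprod_singleton]
  · rw [omitProd, if_neg hr, ← nprod_insert (Finset.notMem_erase j _)
      (univ_erase_nonempty_of_ne_one hr j), Finset.insert_erase (Finset.mem_univ j)]

theorem isIdempotentElem_omitProd (hε : ∀ i, IsIdempotentElem (ε i)) (j : Fin r) :
    IsIdempotentElem (omitProd e ε j) := by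
  by_cases hr : r = 1
  · rw [omitProd, if_pos hr]
    exact isIdempotentElem_elt e
  · rw [omitProd, if_neg hr]
    exact isIdempotentElem_nprod (univ_erase_nonempty_of_ne_one hr j) fun i _ => hε i

theorem principalChar_omitProd (hεe : ∀ i, ε i * elt e = ε i) {m : E} (hm : m ≠ 0)
    (j : Fin r) : principalChar m hm (omitProd e ε j)
      = (if m ≤ e then 1 else 0) * ∏ i ∈ Finset.univ.erase j, principalChar m hm (ε i) := by
  by_cases hr : r = 1
  · rw [omitProd, if_pos hr, principalChar_elt, univ_eq_singleton_of_eq_one hr j,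
      Finset.erase_singleton, Finset.prod_empty, mul_one]
  · rw [omitProd, if_neg hr, map_nprod _ (univ_erase_nonempty_of_ne_one hr j)]
    by_cases hme : m ≤ e
    · rw [if_pos hme, one_mul]
    · obtain ⟨i, hi⟩ := univ_erase_nonempty_of_ne_one hr j
      rw [if_neg hme, zero_mul]
      refine Finset.prod_eq_zero hi ?_
      rw [← hεe i, map_mul, principalChar_elt, if_neg hme, mul_zero]

end OmitProd

end IndRes

theorem statement_11_general {E : Type} [SemilatticeWithZero E] (ℛ : E → Set (Finset E))
    (hcov : CovSystem ℛ) (h2 : CondII ℛ) :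
    ∀ e : E, e ≠ 0 → ∀ r : ℕ, 0 < r → ∀ Rs : Fin r → Finset E, Function.Injective Rs →
    (∀ i, Rs i ∈ ℛ e) → ∀ ε : Fin r → ZE E,
    (∀ i, (∃ d ∈ supp (join (Rs i) (fun f => f)), ε i = elt d) ∨
          ε i = elt e - join (Rs i) (fun f => f)) →
    ∀ j : Fin r,
      (if r = 1 then elt e else nprod (Finset.univ.erase j) ε) ≠ 0 →
      nprod Finset.univ ε * (if r = 1 then elt e else nprod (Finset.univ.erase j) ε)
          = nprod Finset.univ ε ∧
      nprod Finset.univ ε ≠ (if r = 1 then elt e else nprod (Finset.univ.erase j) ε) := by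
  intro e he r _ Rs hinj hRs ε hε j hne
  change omitProd e ε j ≠ 0 at hne
  change nprod Finset.univ ε * omitProd e ε j = nprod Finset.univ ε ∧
    nprod Finset.univ ε ≠ omitProd e ε j
  have hR : ∀ i, IsCover e (Rs i) := fun i => hcov e he (Rs i) (hRs i)
  have hεe : ∀ i, ε i * elt e = ε i := fun i => (hR i).mul_elt_of_mem_coverFactors (hε i)
  have hidem := isIdempotentElem_omitProd (e := e)
    (fun i => (hR i).isIdempotentElem_of_mem_coverFactors (hε i)) j
  rw [nprod_univ_eq_mul_omitProd hεe j]
  refine ⟨by rw [mul_assoc, hidem.eq], fun h => ?_⟩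
  obtain ⟨m₀, hm₀, hne₀⟩ := exists_principalChar_ne_zero hne
  rw [principalChar_omitProd hεe] at hne₀
  obtain ⟨m, hm, hme, hmI, hmj⟩ := exists_separating_principalChar hcov h2 he hinj hRs hε
    (Finset.notMem_erase j Finset.univ) hm₀
    (by_contra fun h => hne₀ (by rw [if_neg h, zero_mul]))
    (Finset.prod_ne_zero_iff.1 (right_ne_zero_of_mul hne₀))
  have hχ := congrArg (principalChar m hm) h
  rw [map_mul, hmj, zero_mul, principalChar_omitProd hεe, if_pos hme,
    Finset.prod_eq_one hmI, mul_one] at hχ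
  exact zero_ne_one hχ

theorem statement_11 {E Γ : Type} [SemilatticeWithZero E] [Group Γ] [MulAction Γ E]
    (hact : IsGammaSL Γ E) (ℛ : E → Set (Finset E))
    (hcov : CovSystem ℛ) (h1 : CondI ℛ) (h2 : CondII ℛ) (h3 : CondIII Γ ℛ) :
    ∀ e : E, e ≠ 0 → ∀ r : ℕ, 0 < r → ∀ Rs : Fin r → Finset E, Function.Injective Rs →
    (∀ i, Rs i ∈ ℛ e) → ∀ ε : Fin r → ZE E,
    (∀ i, (∃ d ∈ supp (join (Rs i) (fun f => f)), ε i = elt d) ∨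
          ε i = elt e - join (Rs i) (fun f => f)) →
    ∀ j : Fin r,
      (if r = 1 then elt e else nprod (Finset.univ.erase j) ε) ≠ 0 →
      nprod Finset.univ ε * (if r = 1 then elt e else nprod (Finset.univ.erase j) ε)
          = nprod Finset.univ ε ∧
      nprod Finset.univ ε ≠ (if r = 1 then elt e else nprod (Finset.univ.erase j) ε) :=
  statement_11_general ℛ hcov h2
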